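/- arXiv:1203.0251 — 2 statements merged into one kernel-verified Lean document; each statement's English description precedes it below -/
import Mathlib

section
/- Let p₀, p_L be probability mass functions on a finite set ι with ∑ i, p₀ i * p_L i > 0. For any probability mass function p and any disjoint events A, B ⊆ ι with P₀(A)L(A) > 0 and P₀(B)L(B) > 0, the ratio P(A∪B)/(P₀(A∪B)L(A∪B)) is at most max(P(A)/(P₀(A)L(A)), P(B)/(P₀(B)L(B))). -/
lemma ratio_aux (pA pB dA dB D : ℝ) (hpA : 0 ≤ pA) (hpB : 0 ≤ pB)
    (hdA : 0 < dA) (hdB : 0 < dB) (hD : dA + dB ≤ D) :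
    (pA + pB) / D ≤ max (pA / dA) (pB / dB) := by
  set m := max (pA / dA) (pB / dB) with hm
  have hm0 : 0 ≤ m := le_trans (div_nonneg hpA hdA.le) (le_max_left _ _)
  have h1 : pA ≤ m * dA := by
    rw [← div_le_iff₀ hdA]; exact le_max_left _ _
  have h2 : pB ≤ m * dB := by
    rw [← div_le_iff₀ hdB]; exact le_max_right _ _
  have hDpos : 0 < D := lt_of_lt_of_le (by linarith) hD
  rw [div_le_iff₀ hDpos]
  nlinarith

theorem ratio_union_le_max {ι : Type*} [Fintype ι] [DecidableEq ι]
    (p₀ pL : ι → ℝ) (h₀0 : ∀ i, 0 ≤ p₀ i) (h₀1 : ∑ i, p₀ i = 1)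
    (hL0 : ∀ i, 0 ≤ pL i) (hL1 : ∑ i, pL i = 1)
    (hS : 0 < ∑ i, p₀ i * pL i)
    (p : ι → ℝ) (hp0 : ∀ i, 0 ≤ p i) (hp1 : ∑ i, p i = 1)
    (A B : Finset ι) (hAB : Disjoint A B)
    (hA : 0 < (∑ i ∈ A, p₀ i) * (∑ i ∈ A, pL i))
    (hB : 0 < (∑ i ∈ B, p₀ i) * (∑ i ∈ B, pL i)) :
    (∑ i ∈ A ∪ B, p i) / ((∑ i ∈ A ∪ B, p₀ i) * (∑ i ∈ A ∪ B, pL i)) ≤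
      max ((∑ i ∈ A, p i) / ((∑ i ∈ A, p₀ i) * (∑ i ∈ A, pL i)))
          ((∑ i ∈ B, p i) / ((∑ i ∈ B, p₀ i) * (∑ i ∈ B, pL i))) := by
  have hqA : 0 ≤ ∑ i ∈ A, p₀ i := Finset.sum_nonneg fun i _ => h₀0 i
  have hqB : 0 ≤ ∑ i ∈ B, p₀ i := Finset.sum_nonneg fun i _ => h₀0 i
  have hlA : 0 ≤ ∑ i ∈ A, pL i := Finset.sum_nonneg fun i _ => hL0 i
  have hlB : 0 ≤ ∑ i ∈ B, pL i := Finset.sum_nonneg fun i _ => hL0 i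
  have hpA : 0 ≤ ∑ i ∈ A, p i := Finset.sum_nonneg fun i _ => hp0 i
  have hpB : 0 ≤ ∑ i ∈ B, p i := Finset.sum_nonneg fun i _ => hp0 i
  rw [Finset.sum_union hAB, Finset.sum_union hAB, Finset.sum_union hAB]
  have key := ratio_aux (∑ i ∈ A, p i) (∑ i ∈ B, p i)
    ((∑ i ∈ A, p₀ i) * (∑ i ∈ A, pL i)) ((∑ i ∈ B, p₀ i) * (∑ i ∈ B, pL i))
    ((∑ i ∈ A, p₀ i + ∑ i ∈ B, p₀ i) * (∑ i ∈ A, pL i + ∑ i ∈ B, pL i))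
    hpA hpB hA hB (by nlinarith)
  exact key
end

section
/- Let p₀, p_L be probability mass functions on a finite set ι with p₀ i > 0 and p_L i > 0 for all i, and let w₀, w_L > 0 with α = w₀/max(w₀,w_L), β = w_L/max(w₀,w_L). Define r i = (p₀ i)^α * (p_L i)^β and S = ∑ i, r i. Then the weighted posterior p₁ʷ i = r i / S uniquely minimizes, over all probability mass functions p, the quantity max_i p i / r i, and the minimum value is 1/S. -/
theorem weighted_posterior_minimax {ι : Type*} [Fintype ι] [Nonempty ι]
    (p₀ pL : ι → ℝ) (h₀0 : ∀ i, 0 < p₀ i) (h₀1 : ∑ i, p₀ i = 1)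
    (hL0 : ∀ i, 0 < pL i) (hL1 : ∑ i, pL i = 1)
    (w₀ wL : ℝ) (hw₀ : 0 < w₀) (hwL : 0 < wL)
    (α β : ℝ) (hα : α = w₀ / max w₀ wL) (hβ : β = wL / max w₀ wL)
    (r : ι → ℝ) (hr : r = fun i => p₀ i ^ α * pL i ^ β)
    (S : ℝ) (hS : S = ∑ i, r i)
    (p : ι → ℝ) (hp0 : ∀ i, 0 ≤ p i) (hp1 : ∑ i, p i = 1) :
    1 / S ≤ Finset.univ.sup' Finset.univ_nonempty (fun i => p i / r i) ∧
      (Finset.univ.sup' Finset.univ_nonempty (fun i => p i / r i) = 1 / S ↔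
        p = fun i => r i / S) := by
  have hr0 : ∀ i, 0 < r i := by
    intro i; rw [hr]
    exact mul_pos (Real.rpow_pos_of_pos (h₀0 i) α) (Real.rpow_pos_of_pos (hL0 i) β)
  have hS0 : 0 < S := by
    rw [hS]; exact Finset.sum_pos (fun i _ => hr0 i) Finset.univ_nonempty
  set M := Finset.univ.sup' Finset.univ_nonempty (fun i => p i / r i) with hM
  have hle : ∀ i, p i ≤ M * r i := by
    intro i
    have := Finset.le_sup' (fun i => p i / r i) (Finset.mem_univ i)
    calc p i = (p i / r i) * r i := by rw [div_mul_cancel₀ _ (hr0 i).ne']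
    _ ≤ M * r i := by exact mul_le_mul_of_nonneg_right this (hr0 i).le
  have h1 : 1 ≤ M * S := by
    calc (1:ℝ) = ∑ i, p i := hp1.symm
    _ ≤ ∑ i, M * r i := Finset.sum_le_sum (fun i _ => hle i)
    _ = M * S := by rw [hS, Finset.mul_sum]
  have hmin : 1 / S ≤ M := by
    rw [div_le_iff₀ hS0]; linarith
  refine ⟨hmin, ?_, ?_⟩
  · intro h
    have hle' : ∀ i ∈ Finset.univ, p i ≤ r i / S := by
      intro i _
      have : p i / r i ≤ 1 / S := h ▸ Finset.le_sup' (fun i => p i / r i) (Finset.mem_univ i)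
      rw [div_le_div_iff₀ (hr0 i) hS0] at this
      rw [le_div_iff₀ hS0]; linarith
    have hsum : ∑ i, p i = ∑ i, r i / S := by
      rw [hp1, ← Finset.sum_div, ← hS, div_self hS0.ne']
    have := (Finset.sum_eq_sum_iff_of_le hle').mp hsum
    funext i
    exact this i (Finset.mem_univ i)
  · intro h
    have : ∀ i, p i / r i = 1 / S := by
      intro i; rw [h]; simp only []; rw [div_right_comm, div_self (hr0 i).ne']
    apply le_antisymm
    · exact Finset.sup'_le _ _ (fun i _ => (this i).le)
    · exact (this (Classical.arbitrary ι)) ▸ Finset.le_sup' (fun i => p i / r i) (Finset.mem_univ _)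
end
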